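/- Clock of the Böhm sequence: let ξ = λab.b(aab) and let δ = λab.b(ab). For every n ≥ 2 and variable x, the term ξ ξ δ^(n−1) x head-reduces in exactly 2n steps to x (ξ ξ δ^(n−1) x), where ξ ξ δ^(n−1) denotes ξξ applied to n−1 copies of δ. -/
import Mathlib


/-- Untyped λ-terms in de Bruijn notation. -/
inductive Lam : Type
  | var : Nat → Lam
  | app : Lam → Lam → Lam
  | lam : Lam → Lam
  deriving DecidableEq

namespace Lam

/-- Lift (shift) free variables ≥ `d` by one. -/
def lift (d : Nat) : Lam → Lam
  | var n => if n < d then var n else var (n + 1)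
  | app s t => app (lift d s) (lift d t)
  | lam t => lam (lift (d + 1) t)

/-- Capture-avoiding substitution of `u` for the variable with index `k`. -/
def subst (k : Nat) (u : Lam) : Lam → Lam
  | var n => if n = k then u else if k < n then var (n - 1) else var n
  | app s t => app (subst k u s) (subst k u t)
  | lam t => lam (subst (k + 1) (lift 0 u) t)

/-- One-step β-reduction `→β` (compatible closure of the β-rule). -/
inductive Step : Lam → Lam → Prop
  | beta (t u : Lam) : Step (app (lam t) u) (subst 0 u t)
  | appL {s s' : Lam} (t : Lam) : Step s s' → Step (app s t) (app s' t)
  | appR (s : Lam) {t t' : Lam} : Step t t' → Step (app s t) (app s t')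
  | lam {t t' : Lam} : Step t t' → Step (lam t) (lam t')

/-- Many-step β-reduction `↠β`. -/
def Red : Lam → Lam → Prop := Relation.ReflTransGen Step

/-- β-convertibility `=β`. -/
def Conv : Lam → Lam → Prop := Relation.EqvGen Step

/-- `Y` is a fixed point combinator: `Y x =β x (Y x)` for a fresh variable `x`. -/
def isFPC (Y : Lam) : Prop :=
  Conv (app (lift 0 Y) (var 0)) (app (var 0) (app (lift 0 Y) (var 0)))

/-- `M P^n`: `M` applied to `n` copies of `P`. -/
def appIter (M P : Lam) : Nat → Lam
  | 0 => M
  | n + 1 => appIter (app M P) P n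

/-- `I = λx.x` -/
def K_I : Lam := lam (var 0)

/-- `S = λxyz.xz(yz)` -/
def K_S : Lam := lam (lam (lam (app (app (var 2) (var 0)) (app (var 1) (var 0)))))

/-- `B = λxyz.x(yz)` -/
def K_B : Lam := lam (lam (lam (app (var 2) (app (var 1) (var 0)))))

/-- `δ = λab.b(ab)` -/
def K_delta : Lam := lam (lam (app (var 0) (app (var 1) (var 0))))

/-- `ω_f = λx.f(xx)` (with `f` the variable bound just outside). -/
def K_omega : Lam := lam (app (var 1) (app (var 0) (var 0)))

/-- Curry's fpc `Y0 = λf.ω_f ω_f`. -/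
def Y0 : Lam := lam (app K_omega K_omega)

/-- `η = λxf.f(xxf)` -/
def K_eta : Lam := lam (lam (app (var 0) (app (app (var 1) (var 1)) (var 0))))

/-- Turing's fpc `Y1 = ηη`. -/
def Y1 : Lam := app K_eta K_eta

/-- One head reduction step: contraction of the head redex. -/
inductive Head : Lam → Lam → Prop
  | beta (t u : Lam) : Head (app (lam t) u) (subst 0 u t)
  | app {s s' : Lam} (t : Lam) : (∀ u, s ≠ lam u) → Head s s' → Head (app s t) (app s' t)
  | lam {t t' : Lam} : Head t t' → Head (lam t) (lam t')

/-- Exactly `k` head reduction steps. -/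
def HeadN : Nat → Lam → Lam → Prop
  | 0, s, t => s = t
  | k + 1, s, t => ∃ u, Head s u ∧ HeadN k u t

/-- Exactly `k` β-reduction steps. -/
def StepN : Nat → Lam → Lam → Prop
  | 0, s, t => s = t
  | k + 1, s, t => ∃ u, Step s u ∧ StepN k u t

/-- `ξ = λab.b(aab)` -/
def K_xi : Lam := lam (lam (app (var 0) (app (app (var 1) (var 1)) (var 0))))

lemma headN_trans : ∀ (a : Nat) {b : Nat} {s t u : Lam},
    HeadN a s t → HeadN b t u → HeadN (a + b) s u := by
  intro a
  induction a with
  | zero =>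
    intro b s t u h1 h2
    simp only [HeadN] at h1
    subst h1
    simpa using h2
  | succ a ih =>
    intro b s t u h1 h2
    obtain ⟨v, hv, h1'⟩ := h1
    have : a + 1 + b = (a + b) + 1 := by omega
    rw [this]
    exact ⟨v, hv, ih h1' h2⟩

lemma headN_one {s t : Lam} (h : Head s t) : HeadN 1 s t := ⟨t, h, rfl⟩

lemma appIter_succ (P : Lam) : ∀ (k : Nat) (M : Lam),
    appIter M P (k + 1) = app (appIter M P k) P := by
  intro k
  induction k with
  | zero => intro M; rfl
  | succ k ih =>
    intro M
    show appIter (app M P) P (k + 1) = _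
    rw [ih]
    rfl

lemma head_ctx : ∀ (k : Nat) {s s' : Lam} (P N : Lam),
    Head s s' → (∀ u, s ≠ lam u) →
    Head (app (appIter s P k) N) (app (appIter s' P k) N) := by
  intro k
  induction k with
  | zero => intro s s' P N h hne; exact Head.app N hne h
  | succ k ih =>
    intro s s' P N h hne
    rw [appIter_succ, appIter_succ]
    exact Head.app N (fun u heq => Lam.noConfusion heq)
      (ih P P h hne)

lemma subst_lift : ∀ (t : Lam) (k : Nat) (u : Lam), subst k u (lift k t) = t := by
  intro t
  induction t with
  | var n =>
    intro k u
    by_cases h : n < k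
    · have h1 : n ≠ k := Nat.ne_of_lt h
      have h2 : ¬ k < n := by omega
      simp [lift, subst, h, h1, h2]
    · have h1 : n + 1 ≠ k := by omega
      have h2 : k < n + 1 := by omega
      simp [lift, subst, h, h1, h2]
  | app s t ihs iht => intro k u; simp [lift, subst, ihs, iht]
  | lam t ih => intro k u; simp [lift, subst, ih]

lemma delta_step1 (A : Lam) :
    Head (app K_delta A) (lam (app (var 0) (app (lift 0 A) (var 0)))) := by
  have h := Head.beta (lam (app (var 0) (app (var 1) (var 0)))) A
  simpa [K_delta, subst] using h

lemma delta_step2 (A B : Lam) :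
    Head (app (lam (app (var 0) (app (lift 0 A) (var 0)))) B) (app B (app A B)) := by
  have h := Head.beta (app (var 0) (app (lift 0 A) (var 0))) B
  simpa [subst, subst_lift] using h

lemma two_step (A B : Lam) : HeadN 2 (app (app K_delta A) B) (app B (app A B)) :=
  ⟨app (lam (app (var 0) (app (lift 0 A) (var 0)))) B,
   Head.app B (fun u heq => Lam.noConfusion heq) (delta_step1 A),
   headN_one (delta_step2 A B)⟩

lemma loop : ∀ (k : Nat) (A N : Lam),
    HeadN (2 * k + 2) (app (appIter (app K_delta A) K_delta k) N)
      (app N (app (appIter A K_delta k) N)) := by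
  intro k
  induction k with
  | zero => intro A N; exact two_step A N
  | succ k ih =>
    intro A N
    have e : 2 * (k + 1) + 2 = 1 + (1 + (2 * k + 2)) := by omega
    rw [e]
    have h1 : Head (app (appIter (app (app K_delta A) K_delta) K_delta k) N)
        (app (appIter (app (lam (app (var 0) (app (lift 0 A) (var 0)))) K_delta) K_delta k) N) :=
      head_ctx k K_delta N
        (Head.app K_delta (fun u heq => Lam.noConfusion heq) (delta_step1 A))
        (fun u heq => Lam.noConfusion heq)
    have h2 : Head (app (appIter (app (lam (app (var 0) (app (lift 0 A) (var 0)))) K_delta) K_delta k) N)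
        (app (appIter (app K_delta (app A K_delta)) K_delta k) N) :=
      head_ctx k K_delta N (delta_step2 A K_delta)
        (fun u heq => Lam.noConfusion heq)
    exact headN_trans 1 (headN_one h1)
      (headN_trans 1 (headN_one h2) (ih (app A K_delta) N))

/-- For `n ≥ 2`, the term `ξ ξ δ^(n-1) x` head-reduces in exactly `2n` steps to
`x (ξ ξ δ^(n-1) x)`. -/
theorem boehm_sequence_clock :
    ∀ n : Nat, 2 ≤ n → ∀ i : Nat,
      HeadN (2 * n)
        (app (appIter (app K_xi K_xi) K_delta (n - 1)) (var i))
        (app (var i) (app (appIter (app K_xi K_xi) K_delta (n - 1)) (var i))) := by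
  intro n hn i
  obtain ⟨k, rfl⟩ : ∃ k, n = k + 2 := ⟨n - 2, by omega⟩
  have e1 : k + 2 - 1 = k + 1 := by omega
  rw [e1]
  have e2 : 2 * (k + 2) = 1 + (1 + (2 * k + 2)) := by omega
  rw [e2]
  have hxi : Head (app K_xi K_xi)
      (lam (app (var 0) (app (app K_xi K_xi) (var 0)))) := by
    have h := Head.beta (lam (app (var 0) (app (app (var 1) (var 1)) (var 0)))) K_xi
    simpa [K_xi, subst, lift] using h
  have hxi2 : Head (app (lam (app (var 0) (app (app K_xi K_xi) (var 0)))) K_delta)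
      (app K_delta (app (app K_xi K_xi) K_delta)) := by
    have h := Head.beta (app (var 0) (app (app K_xi K_xi) (var 0))) K_delta
    simpa [K_xi, K_delta, subst, lift] using h
  have h1 : Head (app (appIter (app (app K_xi K_xi) K_delta) K_delta k) (var i))
      (app (appIter (app (lam (app (var 0) (app (app K_xi K_xi) (var 0)))) K_delta) K_delta k) (var i)) :=
    head_ctx k K_delta (var i)
      (Head.app K_delta (fun u heq => Lam.noConfusion heq) hxi)
      (fun u heq => Lam.noConfusion heq)
  have h2 : Head (app (appIter (app (lam (app (var 0) (app (app K_xi K_xi) (var 0)))) K_delta) K_delta k) (var i))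
      (app (appIter (app K_delta (app (app K_xi K_xi) K_delta)) K_delta k) (var i)) :=
    head_ctx k K_delta (var i) hxi2 (fun u heq => Lam.noConfusion heq)
  exact headN_trans 1 (headN_one h1)
    (headN_trans 1 (headN_one h2) (loop k (app (app K_xi K_xi) K_delta) (var i)))

end Lam
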